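/- For every r ∈ [1,∞], every c > 0 and dimension d ≥ 1 there is a constant C = C(d,r,c) > 0 such that for all σ > 0, the Gaussian function φ_σ(y) := exp(−c|y|²/σ²) satisfies |||φ_σ|||*_r = Σ_{z ∈ ℤ^d} ‖φ_σ·1_{D_z}‖_{L^r(ℝ^d)} ≤ C (σ^d + σ^{d/r}), with the convention d/∞ := 0. -/

import Mathlib

open MeasureTheory ENNReal Real

noncomputable section

/-- The half-open unit cube centered at the lattice point `z`. -/
def unitCube (d : ℕ) (z : Fin d → ℤ) : Set (EuclideanSpace ℝ (Fin d)) :=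
  {x | ∀ i, (z i : ℝ) - 1/2 ≤ x i ∧ x i < (z i : ℝ) + 1/2}

/-- The localized norm `|||f|||*_p := Σ_{z ∈ ℤ^d} ‖f·1_{D_z}‖_{L^p}`. -/
def locNormStar (d : ℕ) (p : ℝ≥0∞) (f : EuclideanSpace ℝ (Fin d) → ℝ) : ℝ≥0∞ :=
  ∑' z : Fin d → ℤ, eLpNorm ((unitCube d z).indicator f) p volume

/-!
Every point `y ∈ D_z` satisfies `‖z‖² ≤ 4 ‖y‖²`. Write `φ_σ` as the product of two copies of
`exp (-c ‖y‖² / (2σ²))` and bound one copy on `D_z` by `exp (-c ‖z‖² / (8σ²))`. The other copy has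
`L^r` norm at most `1` on a cube of volume `1`, and at most `K σ^{d/r}` on all of `ℝ^d` by the
Gaussian integral, so `‖φ_σ 1_{D_z}‖_r ≤ exp (-c ‖z‖² / (8σ²)) · min 1 (K σ^{d/r})`. The lattice
sum of `exp (-c ‖z‖² / (8σ²))` factors over the coordinates, and each one-dimensional sum is at
most `1 + σ √(8π/c)` by comparison with the Gaussian integral on the half-line. The resulting
bound `(1 + σ √(8π/c))^d · min 1 (K σ^{d/r})` is `O(σ^{d/r})` for `σ ≤ 1` and `O(σ^d)` for `σ ≥ 1`.
-/

open Set

lemma tsum_succ_le_setLIntegral_Ioi {f : ℝ → ℝ≥0∞} (hf : AntitoneOn f (Ioi 0)) :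
    ∑' k : ℕ, f (k + 1) ≤ ∫⁻ x in Ioi 0, f x :=
  calc ∑' k : ℕ, f (k + 1)
      ≤ ∑' k : ℕ, ∫⁻ x in Ioc (k : ℝ) (k + 1), f x := by
        refine ENNReal.tsum_le_tsum fun k => ?_
        calc f (k + 1) = ∫⁻ _ in Ioc (k : ℝ) (k + 1), f (k + 1) := by simp
          _ ≤ ∫⁻ x in Ioc (k : ℝ) (k + 1), f x :=
            setLIntegral_mono' measurableSet_Ioc fun x hx =>
              hf (lt_of_le_of_lt k.cast_nonneg hx.1) (show (0 : ℝ) < k + 1 by positivity) hx.2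
    _ = ∫⁻ x in ⋃ k : ℕ, Ioc (k : ℝ) (k + 1), f x := by
        refine (lintegral_iUnion (fun _ => measurableSet_Ioc) ?_ f).symm
        simpa using Nat.mono_cast.pairwise_disjoint_on_Ioc_succ (β := ℝ)
    _ ≤ ∫⁻ x in Ioi 0, f x :=
        lintegral_mono_set <| iUnion_subset fun k _ hx => lt_of_le_of_lt k.cast_nonneg hx.1

lemma tsum_ofReal_exp_neg_mul_int_sq_le {a : ℝ} (ha : 0 < a) :
    ∑' n : ℤ, ENNReal.ofReal (exp (-a * n ^ 2)) ≤ ENNReal.ofReal (1 + √(π / a)) := by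
  set f : ℝ → ℝ≥0∞ := fun x => ENNReal.ofReal (exp (-a * x ^ 2))
  have hf : AntitoneOn f (Ioi 0) := fun x hx y _ hxy => by
    simp only [f, neg_mul]
    gcongr
    exact hx.out.le
  have half_line : ∑' k : ℕ, f (k + 1) ≤ ENNReal.ofReal (√(π / a) / 2) := by
    refine (tsum_succ_le_setLIntegral_Ioi hf).trans_eq ?_
    rw [← ofReal_integral_eq_lintegral_ofReal (integrable_exp_neg_mul_sq ha).integrableOn
      (Filter.Eventually.of_forall fun _ => (exp_pos _).le), integral_gaussian_Ioi]
  calc ∑' n : ℤ, f n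
      = ∑' k : ℕ, (f k + f (-(k + 1))) := by
        rw [← tsum_nat_add_neg_add_one ENNReal.summable]
        push_cast
        rfl
    _ = f 0 + ∑' k : ℕ, f (k + 1) + ∑' k : ℕ, f (k + 1) := by
        rw [ENNReal.tsum_add, tsum_eq_zero_add' ENNReal.summable]
        simp only [f, Nat.cast_add, Nat.cast_one, Nat.cast_zero, neg_sq]
    _ ≤ ENNReal.ofReal 1 + ENNReal.ofReal (√(π / a) / 2) + ENNReal.ofReal (√(π / a) / 2) := by
        gcongr
        simp [f]
    _ = ENNReal.ofReal (1 + √(π / a)) := by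
        rw [← ENNReal.ofReal_add (by norm_num) (by positivity),
          ← ENNReal.ofReal_add (by positivity) (by positivity)]
        ring_nf

lemma ENNReal.tsum_fin_pi_prod {α : Type*} (f : α → ℝ≥0∞) (d : ℕ) :
    ∑' z : Fin d → α, ∏ i, f (z i) = (∑' a, f a) ^ d := by
  induction d with
  | zero => simp
  | succ d ih =>
    rw [← (Fin.consEquiv fun _ => α).tsum_eq, pow_succ', ← ih, ← ENNReal.tsum_mul_right]
    simp only [Fin.consEquiv_apply, Fin.prod_univ_succ, Fin.cons_zero, Fin.cons_succ]
    rw [ENNReal.tsum_prod (f := fun a (z : Fin d → α) => f a * ∏ i, f (z i))]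
    simp only [ENNReal.tsum_mul_left]

lemma tsum_pi_prod_ofReal_exp_neg_mul_int_sq_le {a : ℝ} (ha : 0 < a) (d : ℕ) :
    ∑' z : Fin d → ℤ, ∏ i, ENNReal.ofReal (exp (-a * (z i : ℝ) ^ 2)) ≤
      ENNReal.ofReal (1 + √(π / a)) ^ d := by
  rw [ENNReal.tsum_fin_pi_prod fun n : ℤ => ENNReal.ofReal (exp (-a * n ^ 2))]
  gcongr
  exact tsum_ofReal_exp_neg_mul_int_sq_le ha

section Gaussian

variable {V : Type*} [NormedAddCommGroup V] [InnerProductSpace ℝ V] [FiniteDimensional ℝ V]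
  [MeasurableSpace V] [BorelSpace V]

lemma eLpNorm_exp_neg_mul_sq_norm {b : ℝ} (hb : 0 < b) {p : ℝ≥0∞} (hp0 : p ≠ 0) (hp : p ≠ ∞) :
    eLpNorm (fun y : V => exp (-b * ‖y‖ ^ 2)) p volume =
      ENNReal.ofReal ((π / (b * p.toReal)) ^ (Module.finrank ℝ V / 2 / p.toReal)) := by
  have hq : 0 < p.toReal := ENNReal.toReal_pos hp0 hp
  have hpow : ∀ y : V, ‖exp (-b * ‖y‖ ^ 2)‖ₑ ^ p.toReal =
      ENNReal.ofReal (exp (-(b * p.toReal) * ‖y‖ ^ 2)) := fun y => by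
    rw [Real.enorm_eq_ofReal (exp_pos _).le, ENNReal.ofReal_rpow_of_nonneg (exp_pos _).le hq.le,
      ← exp_mul]
    ring_nf
  have hint := GaussianFourier.integral_rexp_neg_mul_sq_norm (V := V) (mul_pos hb hq)
  rw [eLpNorm_eq_lintegral_rpow_enorm_toReal hp0 hp, lintegral_congr fun y => hpow y,
    ← ofReal_integral_eq_lintegral_ofReal
      (Integrable.of_integral_ne_zero (by rw [hint]; positivity))
      (Filter.Eventually.of_forall fun _ => (exp_pos _).le),
    hint, ENNReal.ofReal_rpow_of_nonneg (by positivity) (by positivity),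
    ← rpow_mul (by positivity), mul_one_div]

lemma exists_eLpNorm_gaussian_le {b : ℝ} (hb : 0 < b) (p : ℝ≥0∞) :
    ∃ K : ℝ, 0 ≤ K ∧ ∀ σ : ℝ, 0 < σ →
      eLpNorm (fun y : V => exp (-(b * ‖y‖ ^ 2) / σ ^ 2)) p volume ≤
        ENNReal.ofReal (K * σ ^ (Module.finrank ℝ V / p.toReal)) := by
  rcases eq_or_ne p 0 with rfl | hp0
  · exact ⟨0, le_rfl, fun σ _ => by simp⟩
  rcases eq_or_ne p ∞ with rfl | hp
  · refine ⟨1, zero_le_one, fun σ _ => ?_⟩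
    refine (eLpNorm_le_of_ae_bound (C := 1) (Filter.Eventually.of_forall fun y => ?_)).trans ?_
    · rw [Real.norm_of_nonneg (exp_pos _).le, exp_le_one_iff, neg_div, neg_nonpos]
      positivity
    · simp
  set d : ℝ := (Module.finrank ℝ V : ℝ)
  set q := p.toReal
  have hq : 0 < q := ENNReal.toReal_pos hp0 hp
  refine ⟨(π / (b * q)) ^ (d / 2 / q), by positivity, fun σ hσ => le_of_eq ?_⟩
  have hfun : (fun y : V => exp (-(b * ‖y‖ ^ 2) / σ ^ 2)) =
      fun y => exp (-(b / σ ^ 2) * ‖y‖ ^ 2) := by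
    ext y; ring_nf
  rw [hfun, eLpNorm_exp_neg_mul_sq_norm (by positivity) hp0 hp]
  congr 1
  have hscale : π / (b / σ ^ 2 * q) = (σ ^ 2) * (π / (b * q)) := by field_simp
  rw [hscale, mul_rpow (by positivity) (by positivity), mul_comm, ← Real.rpow_natCast,
    ← rpow_mul hσ.le]
  congr 2
  push_cast
  ring

end Gaussian

lemma int_sq_le_four_mul_sq {n : ℤ} {t : ℝ} (h₁ : n - 1 / 2 ≤ t) (h₂ : t < n + 1 / 2) :
    (n : ℝ) ^ 2 ≤ 4 * t ^ 2 := by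
  rcases lt_trichotomy n 0 with hn | rfl | hn
  · have : (n : ℝ) ≤ -1 := by exact_mod_cast Int.le_sub_one_of_lt hn
    nlinarith
  · simpa using sq_nonneg t
  · have : (1 : ℝ) ≤ n := by exact_mod_cast hn
    nlinarith

lemma sum_sq_le_four_mul_norm_sq_of_mem_unitCube {d : ℕ} {z : Fin d → ℤ}
    {y : EuclideanSpace ℝ (Fin d)} (hy : y ∈ unitCube d z) :
    ∑ i, (z i : ℝ) ^ 2 ≤ 4 * ‖y‖ ^ 2 := by
  rw [EuclideanSpace.norm_sq_eq, Finset.mul_sum]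
  exact Finset.sum_le_sum fun i _ => by
    simpa only [Real.norm_eq_abs, sq_abs] using int_sq_le_four_mul_sq (hy i).1 (hy i).2

lemma volume_unitCube (d : ℕ) (z : Fin d → ℤ) : volume (unitCube d z) = 1 := by
  have hcube : unitCube d z = (MeasurableEquiv.toLp 2 (Fin d → ℝ)).symm ⁻¹'
      univ.pi fun i => Ico ((z i : ℝ) - 1 / 2) (z i + 1 / 2) := by
    ext x
    simp [unitCube]
  rw [hcube,
    (EuclideanSpace.volume_preserving_symm_measurableEquiv_toLp (Fin d)).measure_preimage
      (MeasurableSet.univ_pi fun _ => measurableSet_Ico).nullMeasurableSet, volume_pi_pi]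
  simp [Real.volume_Ico]
  norm_num

lemma eLpNorm_indicator_unitCube_le_one {d : ℕ} {f : EuclideanSpace ℝ (Fin d) → ℝ}
    (hf : ∀ y, |f y| ≤ 1) (z : Fin d → ℤ) (p : ℝ≥0∞) :
    eLpNorm ((unitCube d z).indicator f) p volume ≤ 1 := by
  calc eLpNorm ((unitCube d z).indicator f) p volume
      ≤ eLpNorm ((unitCube d z).indicator fun _ => (1 : ℝ)) p volume :=
        eLpNorm_mono fun y => by
          by_cases hy : y ∈ unitCube d z <;> simp [hy, hf y]
    _ ≤ 1 := (eLpNorm_indicator_const_le (1 : ℝ) p).trans (by simp [volume_unitCube])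

lemma eLpNorm_indicator_unitCube_gaussian_le {d : ℕ} {c : ℝ} (hc : 0 ≤ c) (σ : ℝ)
    (z : Fin d → ℤ) (p : ℝ≥0∞) :
    eLpNorm ((unitCube d z).indicator fun y => exp (-(c * ‖y‖ ^ 2) / σ ^ 2)) p volume ≤
      (∏ i, ENNReal.ofReal (exp (-(c / (8 * σ ^ 2)) * (z i : ℝ) ^ 2))) *
        min 1 (eLpNorm (fun y : EuclideanSpace ℝ (Fin d) => exp (-(c / 2 * ‖y‖ ^ 2) / σ ^ 2))
          p volume) := by
  set g : EuclideanSpace ℝ (Fin d) → ℝ := fun y => exp (-(c / 2 * ‖y‖ ^ 2) / σ ^ 2)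
  set m : ℝ := exp (-(c / (8 * σ ^ 2)) * ∑ i, (z i : ℝ) ^ 2)
  have hm : ENNReal.ofReal m =
      ∏ i, ENNReal.ofReal (exp (-(c / (8 * σ ^ 2)) * (z i : ℝ) ^ 2)) := by
    rw [← ENNReal.ofReal_prod_of_nonneg fun _ _ => (exp_pos _).le, ← exp_sum, ← Finset.mul_sum]
  have hpt : ∀ y, ‖(unitCube d z).indicator (fun y => exp (-(c * ‖y‖ ^ 2) / σ ^ 2)) y‖ ≤
      ‖(m • (unitCube d z).indicator g) y‖ := fun y => by
    by_cases hy : y ∈ unitCube d z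
    · have hS := mul_le_mul_of_nonneg_left (sum_sq_le_four_mul_norm_sq_of_mem_unitCube hy)
        (by positivity : 0 ≤ c / (8 * σ ^ 2))
      have hsplit : -(c * ‖y‖ ^ 2) / σ ^ 2 =
          -(c / (8 * σ ^ 2)) * (4 * ‖y‖ ^ 2) + -(c / 2 * ‖y‖ ^ 2) / σ ^ 2 := by ring
      simp only [indicator_of_mem hy, Pi.smul_apply, smul_eq_mul, m, g,
        Real.norm_of_nonneg (exp_pos _).le, ← exp_add, hsplit, exp_le_exp]
      linarith
    · simp [indicator_of_notMem hy]
  calc eLpNorm ((unitCube d z).indicator fun y => exp (-(c * ‖y‖ ^ 2) / σ ^ 2)) p volume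
      ≤ eLpNorm (m • (unitCube d z).indicator g) p volume := eLpNorm_mono hpt
    _ = ENNReal.ofReal m * eLpNorm ((unitCube d z).indicator g) p volume := by
        rw [eLpNorm_const_smul, Real.enorm_eq_ofReal (exp_pos _).le]
    _ ≤ _ := by
        rw [hm]
        gcongr
        exact le_min (eLpNorm_indicator_unitCube_le_one (fun y => by
          rw [abs_of_pos (exp_pos _), exp_le_one_iff, neg_div, neg_nonpos]; positivity) z p)
          (eLpNorm_indicator_le g)

lemma one_add_mul_pow_mul_min_le {σ B K e : ℝ} (hσ : 0 < σ) (hB : 0 ≤ B) (hK : 0 ≤ K) (d : ℕ) :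
    (1 + σ * B) ^ d * min 1 (K * σ ^ e) ≤ (1 + B) ^ d * (1 + K) * (σ ^ d + σ ^ e) := by
  have hσe : 0 ≤ σ ^ e := rpow_nonneg hσ.le e
  have hσd : 0 ≤ σ ^ d := by positivity
  have hBd : 0 ≤ (1 + B) ^ d := by positivity
  rcases le_total σ 1 with hσ1 | hσ1
  · calc (1 + σ * B) ^ d * min 1 (K * σ ^ e)
        ≤ (1 + B) ^ d * (K * σ ^ e) := by
          gcongr
          · nlinarith
          · exact min_le_right _ _
      _ ≤ _ := by
          nlinarith [mul_nonneg hBd hσe, mul_nonneg hBd hσd, mul_nonneg hBd (mul_nonneg hK hσd)]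
  · calc (1 + σ * B) ^ d * min 1 (K * σ ^ e)
        ≤ (σ * (1 + B)) ^ d * 1 := by
          gcongr
          · nlinarith
          · exact min_le_left _ _
      _ ≤ _ := by
          rw [mul_pow, mul_one]
          nlinarith [mul_nonneg hBd hσe, mul_nonneg hBd hσd, mul_nonneg hBd (mul_nonneg hK hσd),
            mul_nonneg hBd (mul_nonneg hK hσe)]

theorem locNormStar_gaussian_bound_general
    (d : ℕ) (r : ℝ≥0∞) (c : ℝ) (hc : 0 < c) :
    ∃ C : ℝ, 0 < C ∧
      ∀ σ : ℝ, 0 < σ →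
        locNormStar d r (fun y => Real.exp (-(c * ‖y‖ ^ 2) / σ ^ 2)) ≤
          ENNReal.ofReal (C * (σ ^ d + σ ^ ((d : ℝ) / r.toReal))) := by
  obtain ⟨K, hK, hgauss⟩ :=
    exists_eLpNorm_gaussian_le (V := EuclideanSpace ℝ (Fin d)) (half_pos hc) r
  rw [finrank_euclideanSpace_fin] at hgauss
  set B := √(8 * π / c)
  refine ⟨(1 + B) ^ d * (1 + K), by positivity, fun σ hσ => ?_⟩
  have hwidth : √(π / (c / (8 * σ ^ 2))) = σ * B := by
    rw [show π / (c / (8 * σ ^ 2)) = σ ^ 2 * (8 * π / c) by field_simp, sqrt_mul (sq_nonneg σ),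
      sqrt_sq hσ.le]
  calc locNormStar d r (fun y => Real.exp (-(c * ‖y‖ ^ 2) / σ ^ 2))
      ≤ ∑' z : Fin d → ℤ, (∏ i, ENNReal.ofReal (exp (-(c / (8 * σ ^ 2)) * (z i : ℝ) ^ 2))) *
          min 1 (eLpNorm (fun y : EuclideanSpace ℝ (Fin d) => exp (-(c / 2 * ‖y‖ ^ 2) / σ ^ 2))
            r volume) :=
        ENNReal.tsum_le_tsum fun z => eLpNorm_indicator_unitCube_gaussian_le hc.le σ z r
    _ ≤ ENNReal.ofReal (1 + σ * B) ^ d *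
          ENNReal.ofReal (min 1 (K * σ ^ ((d : ℝ) / r.toReal))) := by
        rw [ENNReal.tsum_mul_right, ENNReal.ofReal_min, ENNReal.ofReal_one, ← hwidth]
        gcongr
        · exact tsum_pi_prod_ofReal_exp_neg_mul_int_sq_le (by positivity) d
        · exact hgauss σ hσ
    _ ≤ _ := by
        rw [← ENNReal.ofReal_pow (by positivity), ← ENNReal.ofReal_mul (by positivity)]
        exact ENNReal.ofReal_le_ofReal (one_add_mul_pow_mul_min_le hσ (sqrt_nonneg _) hK d)

/-- For every `r ∈ [1,∞]`, `c > 0` and `d ≥ 1` there is `C = C(d,r,c) > 0` such that for all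
`σ > 0` the Gaussian `φ_σ(y) = exp(−c|y|²/σ²)` satisfies
`|||φ_σ|||*_r ≤ C (σ^d + σ^{d/r})` (with `d/∞ := 0`). -/
theorem locNormStar_gaussian_bound
    (d : ℕ) (hd : 1 ≤ d) (r : ℝ≥0∞) (hr : 1 ≤ r) (c : ℝ) (hc : 0 < c) :
    ∃ C : ℝ, 0 < C ∧
      ∀ σ : ℝ, 0 < σ →
        locNormStar d r (fun y => Real.exp (-(c * ‖y‖ ^ 2) / σ ^ 2)) ≤
          ENNReal.ofReal (C * (σ ^ d + σ ^ ((d : ℝ) / r.toReal))) :=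
  locNormStar_gaussian_bound_general d r c hc

end
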